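/- With G and H defined from n-variable functions g, h by G = X_{n+3} ⊕ X_{n+2} ⊕ (1⊕X_{n+1})g ⊕ X_{n+1}h and H = X_{n+3} ⊕ X_{n+1} ⊕ (1⊕X_{n+3}⊕X_{n+2})g ⊕ (X_{n+3}⊕X_{n+2})h, for every linear function ℓ(X₁,…,X_{n+3}), at least one of G ⊕ ℓ or H ⊕ ℓ is balanced. -/
import Mathlib


open Finset

abbrev BF (n : ℕ) := (Fin n → ZMod 2) → ZMod 2

def bfInner {n : ℕ} (a x : Fin n → ZMod 2) : ZMod 2 := ∑ i, a i * x i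

def walsh {n : ℕ} (f : BF n) (a : Fin n → ZMod 2) : ℤ :=
  ∑ x : Fin n → ZMod 2, (-1 : ℤ) ^ ((f x + bfInner a x).val)

def hdist {n : ℕ} (f g : BF n) : ℕ :=
  (Finset.univ.filter (fun x => f x ≠ g x)).card

def wt {n : ℕ} (a : Fin n → ZMod 2) : ℕ :=
  (Finset.univ.filter (fun i => a i ≠ 0)).card

def resilient {n : ℕ} (m : ℕ) (f : BF n) : Prop :=
  ∀ a, wt a ≤ m → walsh f a = 0

def balanced {n : ℕ} (f : BF n) : Prop :=
  (Finset.univ.filter (fun x => f x = 1)).card = 2 ^ (n - 1)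

noncomputable def nl {n : ℕ} (f : BF n) : ℕ :=
  sInf {d | ∃ (a : Fin n → ZMod 2) (c : ZMod 2), d = hdist f (fun x => c + bfInner a x)}

def anf {n : ℕ} (f : BF n) (a : Fin n → ZMod 2) : ZMod 2 :=
  ∑ x ∈ Finset.univ.filter (fun x : Fin n → ZMod 2 => ∀ i, a i = 0 → x i = 0), f x

def degree {n : ℕ} (f : BF n) : ℕ :=
  (Finset.univ.filter (fun a => anf f a ≠ 0)).sup wt

noncomputable def AI {n : ℕ} (f : BF n) : ℕ :=
  sInf {d | ∃ g : BF n, g ≠ 0 ∧ ((∀ x, g x * f x = 0) ∨ (∀ x, g x * (1 + f x) = 0)) ∧ degree g = d}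

lemma zmod2_self (x : ZMod 2) : x + x = 0 := by revert x; decide

lemma flip_balanced {N : ℕ} (hN : N ≠ 0) (F : BF N) (b : Fin N → ZMod 2)
    (hb : ∀ v, F (fun i => v i + b i) = F v + 1) : balanced F := by
  classical
  have hall : ∀ x : ZMod 2, x = 0 ∨ x = 1 := by decide
  have key : (univ.filter (fun v => F v = 1)).card
      = (univ.filter (fun v => ¬ F v = 1)).card := by
    apply Finset.card_bij (fun v _ => fun i => v i + b i)
    · intro v hv
      simp only [mem_filter, mem_univ, true_and] at *
      rw [hb, hv]; decide
    · intro v1 h1 v2 h2 heq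
      funext i
      exact add_right_cancel (congrFun heq i)
    · intro w hw
      simp only [mem_filter, mem_univ, true_and] at hw
      refine ⟨fun i => w i + b i, ?_, ?_⟩
      · simp only [mem_filter, mem_univ, true_and]
        rw [hb]
        rcases hall (F w) with hc | hc
        · rw [hc]; rfl
        · exact absurd hc hw
      · funext i
        show w i + b i + b i = w i
        rw [add_assoc, zmod2_self, add_zero]
  have hsplit := Finset.card_filter_add_card_filter_not
    (s := (univ : Finset (Fin N → ZMod 2))) (p := fun v => F v = 1)
  have hcardu : (univ : Finset (Fin N → ZMod 2)).card = 2 ^ N := by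
    simp [Finset.card_univ]
  have hpow : 2 ^ N = 2 * 2 ^ (N - 1) := by
    obtain ⟨M, rfl⟩ : ∃ M, N = M + 1 := ⟨N - 1, by omega⟩
    simp [pow_succ]; ring
  unfold balanced
  omega

lemma bfInner_add' {N : ℕ} (a v b : Fin N → ZMod 2) :
    bfInner a (fun i => v i + b i) = bfInner a v + bfInner a b := by
  simp [bfInner, mul_add, Finset.sum_add_distrib]

lemma bfInner_single {N : ℕ} (a : Fin N → ZMod 2) (j : Fin N) :
    bfInner a (fun i => if i = j then 1 else 0) = a j := by
  simp [bfInner, mul_ite]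

lemma bfInner_pair {N : ℕ} (a : Fin N → ZMod 2) (j k : Fin N) :
    bfInner a (fun i => (if i = j then 1 else 0) + (if i = k then 1 else 0)) = a j + a k := by
  rw [bfInner_add' a (fun i => if i = j then 1 else 0) (fun i => if i = k then 1 else 0),
    bfInner_single, bfInner_single]

theorem G_or_H_plus_linear_balanced (n : ℕ) (g h : BF n) (G H : BF (n + 3))
    (hG : ∀ v : Fin (n + 3) → ZMod 2,
      G v = v ⟨n + 2, by omega⟩ + v ⟨n + 1, by omega⟩
            + (1 + v ⟨n, by omega⟩) * g (fun i : Fin n => v ⟨i.val, by omega⟩)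
            + v ⟨n, by omega⟩ * h (fun i : Fin n => v ⟨i.val, by omega⟩))
    (hH : ∀ v : Fin (n + 3) → ZMod 2,
      H v = v ⟨n + 2, by omega⟩ + v ⟨n, by omega⟩
            + (1 + v ⟨n + 2, by omega⟩ + v ⟨n + 1, by omega⟩)
                * g (fun i : Fin n => v ⟨i.val, by omega⟩)
            + (v ⟨n + 2, by omega⟩ + v ⟨n + 1, by omega⟩)
                * h (fun i : Fin n => v ⟨i.val, by omega⟩)) :
    ∀ a : Fin (n + 3) → ZMod 2,
      balanced (fun v => G v + bfInner a v) ∨ balanced (fun v => H v + bfInner a v) := by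
  intro a
  have hall : ∀ x : ZMod 2, x = 0 ∨ x = 1 := by decide
  rcases hall (a ⟨n+2, by omega⟩) with ha2 | ha2
  · -- a_{n+2} = 0 : flip coordinate n+2 in G
    left
    set b : Fin (n+3) → ZMod 2 := fun i => if i = ⟨n+2, by omega⟩ then 1 else 0 with hb
    apply flip_balanced (by omega) _ b
    intro v
    show G (fun i => v i + b i) + bfInner a (fun i => v i + b i) = (G v + bfInner a v) + 1
    rw [hG (fun i => v i + b i), hG v, bfInner_add', bfInner_single, ha2]
    have e2 : v ⟨n+2, by omega⟩ + b ⟨n+2, by omega⟩ = v ⟨n+2, by omega⟩ + 1 := by simp [hb]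
    have e1 : v ⟨n+1, by omega⟩ + b ⟨n+1, by omega⟩ = v ⟨n+1, by omega⟩ := by
      simp [hb, Fin.ext_iff]
    have e0 : v ⟨n, by omega⟩ + b ⟨n, by omega⟩ = v ⟨n, by omega⟩ := by
      simp [hb, Fin.ext_iff]
    have eg : (fun i : Fin n => v ⟨i.val, by omega⟩ + b ⟨i.val, by omega⟩)
        = (fun i : Fin n => v ⟨i.val, by omega⟩) := by
      funext i
      have hbz : b ⟨i.val, by omega⟩ = 0 := by
        simp only [hb, Fin.ext_iff]; rw [if_neg (by omega)]
      rw [hbz, add_zero]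
    rw [e2, e1, e0, eg]
    ring
  · rcases hall (a ⟨n, by omega⟩) with ha0 | ha0
    · -- a_{n+2} = 1, a_n = 0 : flip coordinate n in H
      right
      set b : Fin (n+3) → ZMod 2 := fun i => if i = ⟨n, by omega⟩ then 1 else 0 with hb
      apply flip_balanced (by omega) _ b
      intro v
      show H (fun i => v i + b i) + bfInner a (fun i => v i + b i) = (H v + bfInner a v) + 1
      rw [hH (fun i => v i + b i), hH v, bfInner_add', bfInner_single, ha0]
      have e2 : v ⟨n+2, by omega⟩ + b ⟨n+2, by omega⟩ = v ⟨n+2, by omega⟩ := by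
        simp [hb, Fin.ext_iff]
      have e1 : v ⟨n+1, by omega⟩ + b ⟨n+1, by omega⟩ = v ⟨n+1, by omega⟩ := by
        simp [hb, Fin.ext_iff]
      have e0 : v ⟨n, by omega⟩ + b ⟨n, by omega⟩ = v ⟨n, by omega⟩ + 1 := by simp [hb]
      have eg : (fun i : Fin n => v ⟨i.val, by omega⟩ + b ⟨i.val, by omega⟩)
          = (fun i : Fin n => v ⟨i.val, by omega⟩) := by
        funext i
        have hbz : b ⟨i.val, by omega⟩ = 0 := by
          simp only [hb, Fin.ext_iff]; rw [if_neg (by omega)]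
        rw [hbz, add_zero]
      rw [e2, e1, e0, eg]
      ring
    · rcases hall (a ⟨n+1, by omega⟩) with ha1 | ha1
      · -- a_{n+2} = 1, a_n = 1, a_{n+1} = 0 : flip coordinate n+1 in G
        left
        set b : Fin (n+3) → ZMod 2 := fun i => if i = ⟨n+1, by omega⟩ then 1 else 0 with hb
        apply flip_balanced (by omega) _ b
        intro v
        show G (fun i => v i + b i) + bfInner a (fun i => v i + b i) = (G v + bfInner a v) + 1
        rw [hG (fun i => v i + b i), hG v, bfInner_add', bfInner_single, ha1]
        have e2 : v ⟨n+2, by omega⟩ + b ⟨n+2, by omega⟩ = v ⟨n+2, by omega⟩ := by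
          simp [hb, Fin.ext_iff]
        have e1 : v ⟨n+1, by omega⟩ + b ⟨n+1, by omega⟩ = v ⟨n+1, by omega⟩ + 1 := by simp [hb]
        have e0 : v ⟨n, by omega⟩ + b ⟨n, by omega⟩ = v ⟨n, by omega⟩ := by
          simp [hb, Fin.ext_iff]
        have eg : (fun i : Fin n => v ⟨i.val, by omega⟩ + b ⟨i.val, by omega⟩)
            = (fun i : Fin n => v ⟨i.val, by omega⟩) := by
          funext i
          have hbz : b ⟨i.val, by omega⟩ = 0 := by
            simp only [hb, Fin.ext_iff]; rw [if_neg (by omega)]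
          rw [hbz, add_zero]
        rw [e2, e1, e0, eg]
        ring
      · -- all three = 1 : flip coordinates n+1 and n+2 in H
        right
        set b : Fin (n+3) → ZMod 2 := fun i =>
          (if i = ⟨n+1, by omega⟩ then 1 else 0) + (if i = ⟨n+2, by omega⟩ then 1 else 0) with hb
        apply flip_balanced (by omega) _ b
        intro v
        show H (fun i => v i + b i) + bfInner a (fun i => v i + b i) = (H v + bfInner a v) + 1
        rw [hH (fun i => v i + b i), hH v, bfInner_add', bfInner_pair, ha1, ha2]
        have e2 : v ⟨n+2, by omega⟩ + b ⟨n+2, by omega⟩ = v ⟨n+2, by omega⟩ + 1 := by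
          simp [hb, Fin.ext_iff]
        have e1 : v ⟨n+1, by omega⟩ + b ⟨n+1, by omega⟩ = v ⟨n+1, by omega⟩ + 1 := by
          simp [hb, Fin.ext_iff]
        have e0 : v ⟨n, by omega⟩ + b ⟨n, by omega⟩ = v ⟨n, by omega⟩ := by
          simp [hb, Fin.ext_iff]
        have eg : (fun i : Fin n => v ⟨i.val, by omega⟩ + b ⟨i.val, by omega⟩)
            = (fun i : Fin n => v ⟨i.val, by omega⟩) := by
          funext i
          have hbz : b ⟨i.val, by omega⟩ = 0 := by
            simp only [hb, Fin.ext_iff]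
            rw [if_neg (by omega), if_neg (by omega), add_zero]
          rw [hbz, add_zero]
        rw [e2, e1, e0, eg]
        have h2 : (2 : ZMod 2) = 0 := rfl
        linear_combination (1 + g (fun i : Fin n => v ⟨i.val, by omega⟩)
          + h (fun i : Fin n => v ⟨i.val, by omega⟩)) * h2
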